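/- arXiv:2508.05214 — 2 statements merged into one kernel-verified Lean document; each statement's English description precedes it below -/
import Mathlib

section
/- Suppose E, Y ∈ ℝ^{n×n} are symmetric with Y positive semidefinite satisfying dual Lyapunov equations FᵀE + EF + GᵀEG + 2ΔαP′ = 0 and FY + YFᵀ + GYGᵀ + Σ₀ = 0, where P′ is symmetric, Δα ≥ 0, and Σ₀ is symmetric. Then Tr(EΣ₀) = Tr(2ΔαP′Y) ≤ 2Δα·λₙ(P′)·Tr(Y), provided P′ is positive semidefinite. -/
open Matrix

/-! The operators `Y ↦ F Y + Y Fᵀ + G Y Gᵀ` and `E ↦ Fᵀ E + E F + Gᵀ E G` are adjoint for the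
trace pairing `⟨E, Y⟩ = tr (E Y)`, which gives the identity. For the bound, diagonalise
`P' = U D Uᵀ`: then `tr (P' Y) = ∑ λᵢ (Uᵀ Y U)ᵢᵢ`, where the diagonal entries of the positive
semidefinite matrix `Uᵀ Y U` are nonnegative and sum to `tr Y`. -/

/-- Smallest eigenvalue of a real symmetric matrix. -/
noncomputable def minEig {n : ℕ} {M : Matrix (Fin n) (Fin n) ℝ} (hM : M.IsHermitian) : ℝ :=
  ⨅ i, hM.eigenvalues i

/-- Largest eigenvalue of a real symmetric matrix. -/
noncomputable def maxEig {n : ℕ} {M : Matrix (Fin n) (Fin n) ℝ} (hM : M.IsHermitian) : ℝ :=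
  ⨆ i, hM.eigenvalues i

namespace Matrix

variable {ι R : Type*} [Fintype ι]

theorem trace_mul_lyapunov_eq [CommSemiring R] (F G E Y : Matrix ι ι R) :
    (E * (F * Y + Y * Fᵀ + G * Y * Gᵀ)).trace = ((Fᵀ * E + E * F + Gᵀ * E * G) * Y).trace := by
  simp only [Matrix.mul_add, Matrix.add_mul, trace_add, ← Matrix.mul_assoc]
  rw [trace_mul_cycle E Y Fᵀ, trace_mul_cycle (E * G) Y Gᵀ, ← Matrix.mul_assoc]
  ring

theorem trace_mul_eq_of_lyapunov [CommRing R] {F G E Y Q S : Matrix ι ι R}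
    (hE : Fᵀ * E + E * F + Gᵀ * E * G + Q = 0) (hY : F * Y + Y * Fᵀ + G * Y * Gᵀ + S = 0) :
    (E * S).trace = (Q * Y).trace := by
  rw [eq_neg_of_add_eq_zero_right hE, eq_neg_of_add_eq_zero_right hY, Matrix.mul_neg,
    Matrix.neg_mul, trace_neg, trace_neg, trace_mul_lyapunov_eq]

theorem trace_diagonal_mul [CommSemiring R] [DecidableEq ι] (d : ι → R) (M : Matrix ι ι R) :
    (diagonal d * M).trace = ∑ i, d i * M i i := by
  simp [trace, diagonal_mul]

theorem IsHermitian.trace_mul_le_of_eigenvalues_le [DecidableEq ι] {P Y : Matrix ι ι ℝ}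
    (hP : P.IsHermitian) (hY : Y.PosSemidef) {c : ℝ} (hc : ∀ i, hP.eigenvalues i ≤ c) :
    (P * Y).trace ≤ c * Y.trace := by
  set U : Matrix ι ι ℝ := (hP.eigenvectorUnitary : Matrix ι ι ℝ)
  have hUU : U * star U = 1 := Unitary.coe_mul_star_self hP.eigenvectorUnitary
  set M := star U * Y * U
  have hM : M.PosSemidef := hY.conjTranspose_mul_mul_same U
  have hPY : (P * Y).trace = ∑ i, hP.eigenvalues i * M i i := by
    conv_lhs => rw [hP.spectral_theorem, Unitary.conjStarAlgAut_apply]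
    rw [Matrix.mul_assoc, Matrix.mul_assoc, trace_mul_comm, Matrix.mul_assoc, trace_diagonal_mul]
    rfl
  have hYM : Y.trace = M.trace := by
    rw [trace_mul_cycle, hUU, Matrix.one_mul]
  rw [hPY, hYM, trace, Finset.mul_sum]
  exact Finset.sum_le_sum fun i _ ↦ mul_le_mul_of_nonneg_right (hc i) hM.diag_nonneg

end Matrix

theorem eigenvalues_le_maxEig {n : ℕ} {M : Matrix (Fin n) (Fin n) ℝ} (hM : M.IsHermitian)
    (i : Fin n) : hM.eigenvalues i ≤ maxEig hM :=
  le_ciSup (Set.finite_range _).bddAbove i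

theorem stmt_11_general {n : ℕ} (F G E Y P' S₀ : Matrix (Fin n) (Fin n) ℝ)
    (hY : Y.PosSemidef) (hP' : P'.PosSemidef)
    (Δα : ℝ) (hΔ : 0 ≤ Δα)
    (h1 : Fᵀ * E + E * F + Gᵀ * E * G + (2 * Δα) • P' = 0)
    (h2 : F * Y + Y * Fᵀ + G * Y * Gᵀ + S₀ = 0) :
    (E * S₀).trace = ((2 * Δα) • (P' * Y)).trace ∧
      ((2 * Δα) • (P' * Y)).trace ≤ 2 * Δα * maxEig hP'.1 * Y.trace := by
  refine ⟨by rw [trace_mul_eq_of_lyapunov h1 h2, Matrix.smul_mul], ?_⟩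
  rw [trace_smul, smul_eq_mul, mul_assoc (2 * Δα)]
  exact mul_le_mul_of_nonneg_left
    (hP'.1.trace_mul_le_of_eigenvalues_le hY (eigenvalues_le_maxEig hP'.1)) (by positivity)

theorem stmt_11 {n : ℕ} (F G E Y P' S₀ : Matrix (Fin n) (Fin n) ℝ)
    (hE : E.IsHermitian) (hY : Y.PosSemidef) (hP' : P'.PosSemidef) (hS : S₀.IsHermitian)
    (Δα : ℝ) (hΔ : 0 ≤ Δα)
    (h1 : Fᵀ * E + E * F + Gᵀ * E * G + (2 * Δα) • P' = 0)
    (h2 : F * Y + Y * Fᵀ + G * Y * Gᵀ + S₀ = 0) :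
    (E * S₀).trace = ((2 * Δα) • (P' * Y)).trace ∧
      ((2 * Δα) • (P' * Y)).trace ≤ 2 * Δα * maxEig hP'.1 * Y.trace :=
  stmt_11_general F G E Y P' S₀ hY hP' Δα hΔ h1 h2
end

section
/- Let K ∈ ℝ^{m×n}, and suppose Q ∈ 𝕊ⁿ₊, R ∈ 𝕊ᵐ₊, Σ₀ ∈ 𝕊ⁿ₊ are positive definite, and P ∈ 𝕊ⁿ₊ solves the Lyapunov equation (A_α+BK)ᵀP + P(A_α+BK) + (C+DK)ᵀP(C+DK) + Q + KᵀRK = 0 with n ≥ 2. If Δα satisfies 0 ≤ Δα ≤ λ₁(Σ₀)λ₁(Q)/(2·Tr(PΣ₀)), then 2ΔαP ≺ Q + KᵀRK. -/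
open Matrix

/-!
Two estimates give `2 Δα λₙ(P) < λ₁(Q)`: `Tr(PΣ₀) ≥ λ₁(Σ₀) Tr P`, because `Σ₀ - λ₁(Σ₀) I ⪰ 0` and
the trace of a product of positive semidefinite matrices is nonnegative; and `Tr P > λₙ(P)`,
because for `n ≥ 2` the trace also contains another, positive, eigenvalue of `P`. Then
`2ΔαP ⪯ 2Δα λₙ(P) I ≺ λ₁(Q) I ⪯ Q ⪯ Q + KᵀRK` in the Loewner order.
-/

open scoped MatrixOrder

namespace Matrix

lemma trace_mul_nonneg {ι : Type*} [Fintype ι] [DecidableEq ι] {P S : Matrix ι ι ℝ}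
    (hP : 0 ≤ P) (hS : 0 ≤ S) : 0 ≤ (P * S).trace := by
  have hconj : 0 ≤ CFC.sqrt P * S * CFC.sqrt P :=
    conjugate_nonneg_of_nonneg hS (CFC.sqrt_nonneg P)
  rw [← CFC.sqrt_mul_sqrt_self P, mul_assoc, trace_mul_comm, mul_assoc, ← mul_assoc]
  exact (nonneg_iff_posSemidef.mp hconj).trace_nonneg

variable {n : ℕ} {M P Q S : Matrix (Fin n) (Fin n) ℝ}

lemma minEig_le_eigenvalues (hM : M.IsHermitian) (i : Fin n) : minEig hM ≤ hM.eigenvalues i :=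
  ciInf_le (Set.finite_range _).bddBelow i

lemma eigenvalues_le_maxEig (hM : M.IsHermitian) (i : Fin n) : hM.eigenvalues i ≤ maxEig hM :=
  le_ciSup (Set.finite_range _).bddAbove i

lemma minEig_smul_one_le (hM : M.IsHermitian) :
    minEig hM • (1 : Matrix (Fin n) (Fin n) ℝ) ≤ M := by
  rw [← Algebra.algebraMap_eq_smul_one, algebraMap_le_iff_le_spectrum hM.isSelfAdjoint,
    hM.spectrum_real_eq_range_eigenvalues]
  rintro _ ⟨i, rfl⟩
  exact minEig_le_eigenvalues hM i

lemma le_maxEig_smul_one (hM : M.IsHermitian) :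
    M ≤ maxEig hM • (1 : Matrix (Fin n) (Fin n) ℝ) := by
  rw [← Algebra.algebraMap_eq_smul_one, le_algebraMap_iff_spectrum_le hM.isSelfAdjoint,
    hM.spectrum_real_eq_range_eigenvalues]
  rintro _ ⟨i, rfl⟩
  exact eigenvalues_le_maxEig hM i

lemma PosDef.minEig_pos [NeZero n] (hM : M.PosDef) : 0 < minEig hM.1 := by
  obtain ⟨i, hi⟩ := exists_eq_ciInf_of_finite (f := hM.1.eigenvalues)
  rw [minEig, ← hi]
  exact hM.eigenvalues_pos i

lemma PosDef.maxEig_lt_trace (hn : 2 ≤ n) (hP : P.PosDef) : maxEig hP.1 < P.trace := by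
  have : Nontrivial (Fin n) := Fin.nontrivial_iff_two_le.mpr hn
  obtain ⟨i, hi⟩ := exists_eq_ciSup_of_finite (f := hP.1.eigenvalues)
  obtain ⟨j, hji⟩ := exists_ne i
  rw [maxEig, ← hi, hP.1.trace_eq_sum_eigenvalues]
  exact Finset.single_lt_sum hji (Finset.mem_univ _) (Finset.mem_univ _)
    (hP.eigenvalues_pos j) fun k _ _ => (hP.eigenvalues_pos k).le

lemma minEig_mul_trace_le_trace_mul (hP : 0 ≤ P) (hS : S.IsHermitian) :
    minEig hS * P.trace ≤ (P * S).trace := by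
  have := trace_mul_nonneg hP (sub_nonneg.mpr (minEig_smul_one_le hS))
  rwa [mul_sub, trace_sub, Matrix.mul_smul, mul_one, trace_smul, smul_eq_mul, sub_nonneg] at this

lemma maxEig_lt_trace_mul_div_minEig (hn : 2 ≤ n) (hP : P.PosDef) (hS : S.PosDef) :
    maxEig hP.1 < (P * S).trace / minEig hS.1 := by
  have : NeZero n := ⟨by omega⟩
  rw [lt_div_iff₀ hS.minEig_pos, mul_comm]
  exact (mul_lt_mul_of_pos_left (hP.maxEig_lt_trace hn) hS.minEig_pos).trans_le
    (minEig_mul_trace_le_trace_mul hP.posSemidef.nonneg hS.1)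

lemma posDef_add_sub_smul_of_mul_maxEig_lt {N : Matrix (Fin n) (Fin n) ℝ} (hQ : Q.IsHermitian)
    (hN : 0 ≤ N) (hP : P.IsHermitian) {c : ℝ} (hc : 0 ≤ c) (h : c * maxEig hP < minEig hQ) :
    (Q + N - c • P).PosDef := by
  have hgap : 0 ≤ Q + N - c • P - (minEig hQ - c * maxEig hP) • (1 : Matrix (Fin n) (Fin n) ℝ) := by
    have hQ' := sub_nonneg.mpr (minEig_smul_one_le hQ)
    have hP' := smul_nonneg hc (sub_nonneg.mpr (le_maxEig_smul_one hP))
    convert add_nonneg (add_nonneg hQ' hN) hP' using 1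
    module
  simpa using (PosDef.one.smul (sub_pos.mpr h)).add_posSemidef (nonneg_iff_posSemidef.mp hgap)

end Matrix

theorem stmt_15_general {n m : ℕ} (hn : 2 ≤ n) (K : Matrix (Fin m) (Fin n) ℝ)
    (P Q S₀ : Matrix (Fin n) (Fin n) ℝ) (R : Matrix (Fin m) (Fin m) ℝ)
    (hP : P.PosDef) (hQ : Q.PosDef) (hR : R.PosDef) (hS : S₀.PosDef)
    (Δα : ℝ) (hΔ₀ : 0 ≤ Δα)
    (hΔ : Δα ≤ minEig hS.1 * minEig hQ.1 / (2 * (P * S₀).trace)) :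
    (Q + Kᵀ * R * K - (2 * Δα) • P).PosDef := by
  have : NeZero n := ⟨by omega⟩
  have hKRK : 0 ≤ Kᵀ * R * K := by
    rw [nonneg_iff_posSemidef, ← conjTranspose_eq_transpose_of_trivial]
    exact hR.posSemidef.conjTranspose_mul_mul_same K
  refine posDef_add_sub_smul_of_mul_maxEig_lt hQ.1 hKRK hP.1 (by positivity) ?_
  have hT : 0 < (P * S₀).trace := (mul_pos hS.minEig_pos hP.trace_pos).trans_le
    (minEig_mul_trace_le_trace_mul hP.posSemidef.nonneg hS.1)
  rcases hΔ₀.eq_or_lt with rfl | hΔpos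
  · simpa using hQ.minEig_pos
  calc 2 * Δα * maxEig hP.1 < 2 * Δα * ((P * S₀).trace / minEig hS.1) := by
        gcongr
        exact maxEig_lt_trace_mul_div_minEig hn hP hS
    _ ≤ minEig hQ.1 := by
      have hs := hS.minEig_pos
      rw [le_div_iff₀ (by positivity)] at hΔ
      field_simp
      linarith

theorem stmt_15 {n m : ℕ} (hn : 2 ≤ n) (A C : Matrix (Fin n) (Fin n) ℝ)
    (B D : Matrix (Fin n) (Fin m) ℝ) (K : Matrix (Fin m) (Fin n) ℝ)
    (P Q S₀ : Matrix (Fin n) (Fin n) ℝ) (R : Matrix (Fin m) (Fin m) ℝ)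
    (hP : P.PosDef) (hQ : Q.PosDef) (hR : R.PosDef) (hS : S₀.PosDef)
    (α : ℝ)
    (hLyap : ((A - α • (1 : Matrix (Fin n) (Fin n) ℝ)) + B * K)ᵀ * P
        + P * ((A - α • (1 : Matrix (Fin n) (Fin n) ℝ)) + B * K)
        + (C + D * K)ᵀ * P * (C + D * K) + Q + Kᵀ * R * K = 0)
    (Δα : ℝ) (hΔ₀ : 0 ≤ Δα)
    (hΔ : Δα ≤ minEig hS.1 * minEig hQ.1 / (2 * (P * S₀).trace)) :
    (Q + Kᵀ * R * K - (2 * Δα) • P).PosDef :=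
  stmt_15_general hn K P Q S₀ R hP hQ hR hS Δα hΔ₀ hΔ
end
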